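/- arXiv:2004.00750 — 2 statements merged into one kernel-verified Lean document; each statement's English description precedes it below -/
import Mathlib

section
/- Let a terrain with n points be given and let i, k be indices with i + 2 ≤ k such that p_i and p_k do NOT see each other. Let j be the largest index with i < j < k such that p_i sees p_j, and let j' be the smallest index with i < j' < k such that p_{j'} sees p_k. Then j ≤ j'. -/
/-- `p j` is strictly below the segment `p i p k`. -/
def StrictlyBelow {n : ℕ} (x y : Fin n → ℝ) (i j k : Fin n) : Prop :=
  (x k - x j) * y i - (x k - x i) * y j + (x j - x i) * y k > 0

/-- `p j` is strictly above the segment `p i p k`. -/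
def StrictlyAbove {n : ℕ} (x y : Fin n → ℝ) (i j k : Fin n) : Prop :=
  (x k - x j) * y i - (x k - x i) * y j + (x j - x i) * y k < 0

/-- `p j` lies on or above the segment `p i p k`. -/
def OnOrAbove {n : ℕ} (x y : Fin n → ℝ) (i j k : Fin n) : Prop :=
  (x k - x j) * y i - (x k - x i) * y j + (x j - x i) * y k ≤ 0

/-- For `i < k`, the points `p i` and `p k` see each other. -/
def Sees {n : ℕ} (x y : Fin n → ℝ) (i k : Fin n) : Prop :=
  (k : ℕ) = (i : ℕ) + 1 ∨ ∀ j : Fin n, i < j → j < k → StrictlyBelow x y i j k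

/-- The visibility graph of the terrain, as a symmetric relation. -/
def VisGraph {n : ℕ} (x y : Fin n → ℝ) (i k : Fin n) : Prop :=
  (i < k ∧ Sees x y i k) ∨ (k < i ∧ Sees x y k i)

/-- The edges `{i,k}` (with `i < k`) of the graph `G'` on `{0,…,6}`. -/
def GpEdge (i k : ℕ) : Prop :=
  (i, k) ∈ [(0,1),(1,2),(2,3),(3,4),(4,5),(5,6),
            (0,3),(0,4),(0,5),(0,6),(1,3),(1,6),(2,6),(3,5),(3,6)]

/-!
Write `D(a,m,d)` for the expression in `StrictlyBelow x y a m d`. Among points in increasing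
order of abscissae, `D` satisfies linear identities whose coefficients are positive differences
of abscissae, so "strictly below" propagates from smaller segments to larger ones.
If `j' < j`, then `i < j' < j < k`; `p j'` is below `p i p j` and `p j` below `p j' p k`, which
puts both below `p i p k`. Every other point strictly between `i` and `k` is below `p i p j` or
`p j' p k`, hence below `p i p k`, so `p i` would see `p k`.
-/

namespace StrictlyBelow

variable {n : ℕ} {x y : Fin n → ℝ} {a b c d m : Fin n}

theorem extend_right (hm : StrictlyBelow x y a m c) (hc : StrictlyBelow x y a c d)
    (ham : x a < x m) (hac : x a < x c) (hcd : x c < x d) : StrictlyBelow x y a m d := by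
  unfold StrictlyBelow at *
  -- D(a,m,d)·(x c - x a) = D(a,m,c)·(x d - x a) + D(a,c,d)·(x m - x a)
  nlinarith [mul_pos hm (sub_pos.2 (hac.trans hcd)), mul_pos hc (sub_pos.2 ham), sub_pos.2 hac]

theorem extend_left (hm : StrictlyBelow x y b m d) (hb : StrictlyBelow x y a b d)
    (hab : x a < x b) (hbm : x b < x m) (hmd : x m < x d) : StrictlyBelow x y a m d := by
  unfold StrictlyBelow at *
  -- D(a,m,d)·(x d - x b) = D(b,m,d)·(x d - x a) + D(a,b,d)·(x d - x m)
  nlinarith [mul_pos hm (sub_pos.2 (hab.trans (hbm.trans hmd))), mul_pos hb (sub_pos.2 hmd),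
    sub_pos.2 (hbm.trans hmd)]

theorem outer_left (hb : StrictlyBelow x y a b c) (hc : StrictlyBelow x y b c d)
    (hab : x a < x b) (hbc : x b < x c) (hcd : x c < x d) : StrictlyBelow x y a b d := by
  unfold StrictlyBelow at *
  -- D(a,b,d)·(x c - x b) = D(a,b,c)·(x d - x b) + D(b,c,d)·(x b - x a)
  nlinarith [mul_pos hb (sub_pos.2 (hbc.trans hcd)), mul_pos hc (sub_pos.2 hab), sub_pos.2 hbc]

end StrictlyBelow

theorem Sees.strictlyBelow {n : ℕ} {x y : Fin n → ℝ} {i m k : Fin n} (h : Sees x y i k)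
    (him : i < m) (hmk : m < k) : StrictlyBelow x y i m k := by
  rcases h with hadj | hall
  · have : (i : ℕ) < m := him
    have : (m : ℕ) < k := hmk
    omega
  · exact hall m him hmk

theorem Sees.of_interleaved {n : ℕ} {x y : Fin n → ℝ} (hx : StrictMono x) {a b c d : Fin n}
    (hab : a < b) (hbc : b < c) (hcd : c < d) (hac : Sees x y a c) (hbd : Sees x y b d) :
    Sees x y a d := by
  have hb_ad : StrictlyBelow x y a b d :=
    (hac.strictlyBelow hab hbc).outer_left (hbd.strictlyBelow hbc hcd) (hx hab) (hx hbc) (hx hcd)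
  have hc_ad : StrictlyBelow x y a c d :=
    (hbd.strictlyBelow hbc hcd).extend_left hb_ad (hx hab) (hx hbc) (hx hcd)
  refine Or.inr fun m ham hmd => ?_
  rcases lt_or_ge m c with hmc | hcm
  · exact (hac.strictlyBelow ham hmc).extend_right hc_ad (hx ham) (hx (ham.trans hmc)) (hx hcd)
  · have hbm : b < m := hbc.trans_le hcm
    exact (hbd.strictlyBelow hbm hmd).extend_left hb_ad (hx hab) (hx hbm) (hx hmd)

theorem designated_blockers_ordered_general {n : ℕ} (x y : Fin n → ℝ) (hx : StrictMono x)
    (i k : Fin n) (hnsee : ¬ Sees x y i k)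
    (j : Fin n) (hjk : j < k) (hsees_ij : Sees x y i j)
    (j' : Fin n) (hij' : i < j') (hsees_j'k : Sees x y j' k) :
    j ≤ j' := by
  by_contra! hj'j
  exact hnsee (Sees.of_interleaved hx hij' hj'j hjk hsees_ij hsees_j'k)

theorem designated_blockers_ordered {n : ℕ} (x y : Fin n → ℝ) (hx : StrictMono x)
    (i k : Fin n) (hik : (i : ℕ) + 2 ≤ (k : ℕ)) (hnsee : ¬ Sees x y i k)
    (j : Fin n) (hij : i < j) (hjk : j < k) (hsees_ij : Sees x y i j)
    (hjmax : ∀ j₂ : Fin n, i < j₂ → j₂ < k → Sees x y i j₂ → j₂ ≤ j)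
    (j' : Fin n) (hij' : i < j') (hj'k : j' < k) (hsees_j'k : Sees x y j' k)
    (hj'min : ∀ j₂ : Fin n, i < j₂ → j₂ < k → Sees x y j₂ k → j' ≤ j₂) :
    j ≤ j' :=
  designated_blockers_ordered_general x y hx i k hnsee j hjk hsees_ij j' hij' hsees_j'k
end

section
/- Let x_0 < x_1 < … < x_6 and y_0, …, y_6 be real numbers satisfying all six G'-constraints. Then the visibility graph of the terrain with points p_i = (x_i, y_i) is exactly G': for all 0 ≤ i < k ≤ 6, p_i and p_k see each other if and only if {i, k} is an edge of G'. -/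
/-!
Write `s(i, j)` for the slope of `p i p j`. For `x i < x j < x k` the slope `s(i, k)` is a weighted
mean of `s(i, j)` and `s(j, k)`, so `p j` lies strictly below `p i p k` exactly when
`s(i, j) < s(i, k)`, exactly when `s(i, k) < s(j, k)`, and exactly when `s(i, j) < s(j, k)`. Each
constraint is therefore a comparison of slopes, and the further orientations of triples follow by
chaining such comparisons. Visibility glues: if `i` sees `j`, `j` sees `k` and `p j` is below
`p i p k`, then `i` sees `k`. Starting from consecutive pairs this yields every edge of `G'`, and
each non-edge `{i, k}` is blocked by one point strictly above `p i p k`.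
-/

noncomputable def segmentSlope {n : ℕ} (x y : Fin n → ℝ) (i j : Fin n) : ℝ :=
  (y j - y i) / (x j - x i)

def orientation {n : ℕ} (x y : Fin n → ℝ) (i j k : Fin n) : ℝ :=
  (x k - x j) * y i - (x k - x i) * y j + (x j - x i) * y k

section Slopes

variable {n : ℕ} {x y : Fin n → ℝ} {i j k : Fin n}

theorem strictlyBelow_iff_orientation_pos :
    StrictlyBelow x y i j k ↔ 0 < orientation x y i j k := Iff.rfl

theorem strictlyAbove_iff_strictlyBelow_neg :
    StrictlyAbove x y i j k ↔ StrictlyBelow x (-y) i j k := by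
  simp only [StrictlyAbove, StrictlyBelow, Pi.neg_apply]
  constructor <;> intro h <;> linarith

theorem segmentSlope_neg (i j : Fin n) : segmentSlope x (-y) i j = -segmentSlope x y i j := by
  simp only [segmentSlope, Pi.neg_apply]
  ring

theorem orientation_eq_left (hij : x i ≠ x j) (hik : x i ≠ x k) :
    orientation x y i j k =
      (x j - x i) * (x k - x i) * (segmentSlope x y i k - segmentSlope x y i j) := by
  have := sub_ne_zero.2 hij.symm
  have := sub_ne_zero.2 hik.symm
  simp only [orientation, segmentSlope]
  field_simp
  ring

theorem orientation_eq_right (hik : x i ≠ x k) (hjk : x j ≠ x k) :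
    orientation x y i j k =
      (x k - x i) * (x k - x j) * (segmentSlope x y j k - segmentSlope x y i k) := by
  have := sub_ne_zero.2 hik.symm
  have := sub_ne_zero.2 hjk.symm
  simp only [orientation, segmentSlope]
  field_simp
  ring

theorem orientation_eq_outer (hij : x i ≠ x j) (hjk : x j ≠ x k) :
    orientation x y i j k =
      (x j - x i) * (x k - x j) * (segmentSlope x y j k - segmentSlope x y i j) := by
  have := sub_ne_zero.2 hij.symm
  have := sub_ne_zero.2 hjk.symm
  simp only [orientation, segmentSlope]
  field_simp
  ring

theorem strictlyBelow_iff_segmentSlope_lt_left (hij : x i < x j) (hjk : x j < x k) :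
    StrictlyBelow x y i j k ↔ segmentSlope x y i j < segmentSlope x y i k := by
  rw [strictlyBelow_iff_orientation_pos, orientation_eq_left hij.ne (hij.trans hjk).ne,
    mul_pos_iff_of_pos_left (mul_pos (sub_pos.2 hij) (sub_pos.2 (hij.trans hjk))), sub_pos]

theorem strictlyBelow_iff_segmentSlope_lt_right (hij : x i < x j) (hjk : x j < x k) :
    StrictlyBelow x y i j k ↔ segmentSlope x y i k < segmentSlope x y j k := by
  rw [strictlyBelow_iff_orientation_pos, orientation_eq_right (hij.trans hjk).ne hjk.ne,
    mul_pos_iff_of_pos_left (mul_pos (sub_pos.2 (hij.trans hjk)) (sub_pos.2 hjk)), sub_pos]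

theorem strictlyBelow_iff_segmentSlope_lt_outer (hij : x i < x j) (hjk : x j < x k) :
    StrictlyBelow x y i j k ↔ segmentSlope x y i j < segmentSlope x y j k := by
  rw [strictlyBelow_iff_orientation_pos, orientation_eq_outer hij.ne hjk.ne,
    mul_pos_iff_of_pos_left (mul_pos (sub_pos.2 hij) (sub_pos.2 hjk)), sub_pos]

theorem strictlyAbove_iff_segmentSlope_lt_left (hij : x i < x j) (hjk : x j < x k) :
    StrictlyAbove x y i j k ↔ segmentSlope x y i k < segmentSlope x y i j := by
  rw [strictlyAbove_iff_strictlyBelow_neg, strictlyBelow_iff_segmentSlope_lt_left hij hjk,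
    segmentSlope_neg, segmentSlope_neg, neg_lt_neg_iff]

theorem strictlyAbove_iff_segmentSlope_lt_right (hij : x i < x j) (hjk : x j < x k) :
    StrictlyAbove x y i j k ↔ segmentSlope x y j k < segmentSlope x y i k := by
  rw [strictlyAbove_iff_strictlyBelow_neg, strictlyBelow_iff_segmentSlope_lt_right hij hjk,
    segmentSlope_neg, segmentSlope_neg, neg_lt_neg_iff]

theorem strictlyAbove_iff_segmentSlope_lt_outer (hij : x i < x j) (hjk : x j < x k) :
    StrictlyAbove x y i j k ↔ segmentSlope x y j k < segmentSlope x y i j := by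
  rw [strictlyAbove_iff_strictlyBelow_neg, strictlyBelow_iff_segmentSlope_lt_outer hij hjk,
    segmentSlope_neg, segmentSlope_neg, neg_lt_neg_iff]

theorem StrictlyBelow.segmentSlope_lt (h : StrictlyBelow x y i j k) (hij : x i < x j)
    (hjk : x j < x k) :
    segmentSlope x y i j < segmentSlope x y i k ∧ segmentSlope x y i k < segmentSlope x y j k :=
  ⟨(strictlyBelow_iff_segmentSlope_lt_left hij hjk).1 h,
    (strictlyBelow_iff_segmentSlope_lt_right hij hjk).1 h⟩

theorem StrictlyAbove.segmentSlope_lt (h : StrictlyAbove x y i j k) (hij : x i < x j)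
    (hjk : x j < x k) :
    segmentSlope x y j k < segmentSlope x y i k ∧ segmentSlope x y i k < segmentSlope x y i j :=
  ⟨(strictlyAbove_iff_segmentSlope_lt_right hij hjk).1 h,
    (strictlyAbove_iff_segmentSlope_lt_left hij hjk).1 h⟩

end Slopes

section Visibility

variable {n : ℕ} {x y : Fin n → ℝ} {i j k : Fin n}

theorem Sees.strictlyBelow_s5 (h : Sees x y i k) (hij : i < j) (hjk : j < k) :
    StrictlyBelow x y i j k :=
  h.resolve_left (by rw [Fin.lt_def] at hij hjk; omega) j hij hjk

theorem StrictlyAbove.not_sees (h : StrictlyAbove x y i j k) (hij : i < j := by decide)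
    (hjk : j < k := by decide) : ¬Sees x y i k :=
  fun hs => lt_asymm h (hs.strictlyBelow_s5 hij hjk)

theorem StrictlyBelow.sees_of_sees (hb : StrictlyBelow x y i j k) (hx : StrictMono x)
    (hsij : Sees x y i j) (hsjk : Sees x y j k) (hij : i < j := by decide)
    (hjk : j < k := by decide) : Sees x y i k := by
  refine Or.inr fun m him hmk => ?_
  rcases lt_trichotomy m j with hmj | rfl | hjm
  · rw [strictlyBelow_iff_segmentSlope_lt_left (hx him) (hx hmk)]
    calc segmentSlope x y i m < segmentSlope x y i j :=
          (strictlyBelow_iff_segmentSlope_lt_left (hx him) (hx hmj)).1 (hsij.strictlyBelow_s5 him hmj)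
      _ < segmentSlope x y i k := (strictlyBelow_iff_segmentSlope_lt_left (hx hij) (hx hjk)).1 hb
  · exact hb
  · rw [strictlyBelow_iff_segmentSlope_lt_right (hx him) (hx hmk)]
    calc segmentSlope x y i k < segmentSlope x y j k :=
          (strictlyBelow_iff_segmentSlope_lt_right (hx hij) (hx hjk)).1 hb
      _ < segmentSlope x y m k :=
          (strictlyBelow_iff_segmentSlope_lt_right (hx hjm) (hx hmk)).1 (hsjk.strictlyBelow_s5 hjm hmk)

end Visibility

theorem orientations_of_Gp_constraints {x y : Fin 7 → ℝ} (hx : StrictMono x)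
    (h1 : StrictlyAbove x y 0 1 2) (h2 : StrictlyBelow x y 0 3 4) (h3 : StrictlyAbove x y 1 3 5)
    (h4 : StrictlyBelow x y 2 3 6) (h5 : StrictlyBelow x y 3 5 6) (h6 : StrictlyAbove x y 4 5 6) :
    StrictlyBelow x y 3 4 5 ∧ StrictlyBelow x y 0 3 5 ∧ StrictlyBelow x y 0 3 6 ∧
      StrictlyBelow x y 0 1 3 ∧ StrictlyBelow x y 1 2 3 ∧ StrictlyBelow x y 1 3 6 ∧
      StrictlyAbove x y 1 3 4 ∧ StrictlyAbove x y 2 3 4 ∧ StrictlyAbove x y 2 3 5 := by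
  have lt (a b : Fin 7) (hab : a < b := by decide) : x a < x b := hx hab
  have s012 := h1.segmentSlope_lt (lt 0 1) (lt 1 2)
  have s034 := h2.segmentSlope_lt (lt 0 3) (lt 3 4)
  have s135 := h3.segmentSlope_lt (lt 1 3) (lt 3 5)
  have s236 := h4.segmentSlope_lt (lt 2 3) (lt 3 6)
  have s356 := h5.segmentSlope_lt (lt 3 5) (lt 5 6)
  have s456 := h6.segmentSlope_lt (lt 4 5) (lt 5 6)
  have b345 : StrictlyBelow x y 3 4 5 :=
    (strictlyBelow_iff_segmentSlope_lt_right (lt 3 4) (lt 4 5)).2 (by linarith)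
  have s345 := b345.segmentSlope_lt (lt 3 4) (lt 4 5)
  have b013 : StrictlyBelow x y 0 1 3 :=
    (strictlyBelow_iff_segmentSlope_lt_right (lt 0 1) (lt 1 3)).2 (by linarith)
  have s013 := b013.segmentSlope_lt (lt 0 1) (lt 1 3)
  have b123 : StrictlyBelow x y 1 2 3 :=
    (strictlyBelow_iff_segmentSlope_lt_left (lt 1 2) (lt 2 3)).2 (by linarith)
  have s123 := b123.segmentSlope_lt (lt 1 2) (lt 2 3)
  exact ⟨b345, (strictlyBelow_iff_segmentSlope_lt_outer (lt 0 3) (lt 3 5)).2 (by linarith),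
    (strictlyBelow_iff_segmentSlope_lt_outer (lt 0 3) (lt 3 6)).2 (by linarith), b013, b123,
    (strictlyBelow_iff_segmentSlope_lt_outer (lt 1 3) (lt 3 6)).2 (by linarith),
    (strictlyAbove_iff_segmentSlope_lt_outer (lt 1 3) (lt 3 4)).2 (by linarith),
    (strictlyAbove_iff_segmentSlope_lt_outer (lt 2 3) (lt 3 4)).2 (by linarith),
    (strictlyAbove_iff_segmentSlope_lt_outer (lt 2 3) (lt 3 5)).2 (by linarith)⟩

theorem lp_feasible_gives_Gp (x y : Fin 7 → ℝ) (hx : StrictMono x)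
    (h1 : StrictlyAbove x y 0 1 2)
    (h2 : StrictlyBelow x y 0 3 4)
    (h3 : StrictlyAbove x y 1 3 5)
    (h4 : StrictlyBelow x y 2 3 6)
    (h5 : StrictlyBelow x y 3 5 6)
    (h6 : StrictlyAbove x y 4 5 6) :
    ∀ i k : Fin 7, i < k → (Sees x y i k ↔ GpEdge (i : ℕ) (k : ℕ)) := by
  obtain ⟨b345, b035, b036, b013, b123, b136, a134, a234, a235⟩ :=
    orientations_of_Gp_constraints hx h1 h2 h3 h4 h5 h6
  have s13 := b123.sees_of_sees hx (Or.inl rfl) (Or.inl rfl)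
  have s35 := b345.sees_of_sees hx (Or.inl rfl) (Or.inl rfl)
  have s36 := h5.sees_of_sees hx s35 (Or.inl rfl)
  have s03 := b013.sees_of_sees hx (Or.inl rfl) s13
  have s04 := h2.sees_of_sees hx s03 (Or.inl rfl)
  have s05 := b035.sees_of_sees hx s03 s35
  have s06 := b036.sees_of_sees hx s03 s36
  have s16 := b136.sees_of_sees hx s13 s36
  have s26 := h4.sees_of_sees hx (Or.inl rfl) s36
  have n02 := h1.not_sees
  have n14 := a134.not_sees
  have n15 := h3.not_sees
  have n24 := a234.not_sees
  have n25 := a235.not_sees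
  have n46 := h6.not_sees
  intro i k hik
  fin_cases i <;> fin_cases k
  all_goals first
    | exact absurd hik (by decide)
    | exact iff_of_true (Or.inl rfl) (by simp [GpEdge])
    | exact iff_of_true ‹_› (by simp [GpEdge])
    | exact iff_of_false ‹_› (by simp [GpEdge])
end
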